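/- arXiv:2311.11153 — 3 statements merged into one kernel-verified Lean document; each statement's English description precedes it below -/
import Mathlib

section
/- Fix a positive integer parameters n, m, k, c with 1 < k < n and 1 < c < m, a real n×m data matrix X, and a column-stochastic m×c matrix θ; set V = Xθ. Then there exist a row-stochastic n×k matrix α, a row-stochastic k×n matrix β, and a column-stochastic c×m matrix γ that minimize RSS = ‖X − α(βV)γ‖² over all such triples (α, β, γ), and such that every row of the biarchetype matrix Z = βV = βXθ, viewed as a point of ℝ^c, belongs to the frontier (topological boundary) of the convex hull of the set of rows of V. -/
/-! A minimizer exists because the feasible triples form a compact set on which RSS is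
continuous. Only the product `α * Z` with `Z = β * V` enters RSS, and the rows of `Z` lie in the
polytope `H = conv (rows of V)`. Any `k ≥ 2` points `Zᵢ` of a bounded set `H` can be traded for `k`
points of its frontier whose convex hull contains them: push `Z₀` away from `Z₁` to a frontier
point `q`, then push every `Zᵢ` away from `q` to a frontier point `Bᵢ`; `q` replaces `B₀`, and
`Z₀` is recovered on the segment from `Z₁` to `q`. Writing the new frontier points as convex
combinations of the rows of `V`, and the rows of `α * Z` as convex combinations of the new
points, yields stochastic `β'`, `α'` with `α' * (β' * V) = α * (β * V)`. -/

open Matrix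

/-- Row-stochastic: nonnegative entries, each row sums to 1. -/
def RowStoch {n k : ℕ} (A : Matrix (Fin n) (Fin k) ℝ) : Prop :=
  (∀ i j, 0 ≤ A i j) ∧ ∀ i, ∑ j, A i j = 1

/-- Column-stochastic: nonnegative entries, each column sums to 1. -/
def ColStoch {m c : ℕ} (A : Matrix (Fin m) (Fin c) ℝ) : Prop :=
  (∀ i j, 0 ≤ A i j) ∧ ∀ j, ∑ i, A i j = 1

/-- Squared Frobenius norm. -/
def frob2 {n m : ℕ} (M : Matrix (Fin n) (Fin m) ℝ) : ℝ :=
  ∑ i, ∑ j, (M i j) ^ 2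

open Set

theorem convexHull_range_row_eq_image_vecMul {ι κ : Type*} [Fintype ι] (W : Matrix ι κ ℝ) :
    convexHull ℝ (range W.row) = (· ᵥ* W) '' stdSimplex ℝ ι := by
  classical
  rw [← convexHull_rangle_single_eq_stdSimplex, show (· ᵥ* W) = ⇑(Matrix.vecMulLinear W) from rfl,
    LinearMap.image_convexHull, ← range_comp]
  congr with i
  simp only [LinearMap.flip_apply, vecMulBilin_apply, single_vecMul, Pi.smul_apply, row_apply,
    smul_eq_mul, one_mul]

theorem rowStoch_iff_forall_mem_stdSimplex {a b : ℕ} {A : Matrix (Fin a) (Fin b) ℝ} :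
    RowStoch A ↔ ∀ i, A i ∈ stdSimplex ℝ (Fin b) := by
  simp only [RowStoch, stdSimplex, mem_ofPred_eq, forall_and]

theorem colStoch_iff_rowStoch_transpose {a b : ℕ} {A : Matrix (Fin a) (Fin b) ℝ} :
    ColStoch A ↔ RowStoch Aᵀ :=
  ⟨fun ⟨h0, h1⟩ => ⟨fun j i => h0 i j, h1⟩, fun ⟨h0, h1⟩ => ⟨fun i j => h0 j i, h1⟩⟩

theorem exists_rowStoch_mul_eq_iff {a n c : ℕ} (W : Matrix (Fin n) (Fin c) ℝ)
    (Y : Matrix (Fin a) (Fin c) ℝ) :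
    (∃ A : Matrix (Fin a) (Fin n) ℝ, RowStoch A ∧ A * W = Y) ↔
      ∀ r, Y r ∈ convexHull ℝ (range W.row) := by
  simp only [convexHull_range_row_eq_image_vecMul, mem_image, rowStoch_iff_forall_mem_stdSimplex]
  constructor
  · rintro ⟨A, hA, rfl⟩ r
    exact ⟨A r, hA r, rfl⟩
  · intro hY
    choose A hA hAY using hY
    exact ⟨Matrix.of A, hA, funext hAY⟩

theorem isCompact_setOf_rowStoch {a b : ℕ} :
    IsCompact {A : Matrix (Fin a) (Fin b) ℝ | RowStoch A} := by
  simp only [rowStoch_iff_forall_mem_stdSimplex]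
  exact isCompact_pi_infinite fun _ => isCompact_stdSimplex ℝ (Fin b)

theorem isCompact_setOf_colStoch {a b : ℕ} :
    IsCompact {A : Matrix (Fin a) (Fin b) ℝ | ColStoch A} := by
  have : {A : Matrix (Fin a) (Fin b) ℝ | ColStoch A} = Matrix.transpose '' {B | RowStoch B} := by
    ext A
    refine ⟨fun h => ⟨Aᵀ, colStoch_iff_rowStoch_transpose.1 h, A.transpose_transpose⟩, ?_⟩
    rintro ⟨B, hB, rfl⟩
    exact colStoch_iff_rowStoch_transpose.2 (by rwa [B.transpose_transpose])
  rw [this]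
  exact isCompact_setOf_rowStoch.image continuous_id.matrix_transpose

theorem IsPreconnected.inter_frontier_nonempty {X : Type*} [TopologicalSpace X] {s t : Set X}
    (hs : IsPreconnected s) (hst : (s ∩ t).Nonempty) (hsdiff : (s \ t).Nonempty) :
    (s ∩ frontier t).Nonempty := by
  by_contra h
  have hcover : s ⊆ interior t ∪ (closure t)ᶜ := by
    intro y hy
    by_contra hy'
    simp only [mem_union, mem_compl_iff, not_or, not_not] at hy'
    exact h ⟨y, hy, hy'.2, hy'.1⟩
  have hdisj : Disjoint (interior t) (closure t)ᶜ :=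
    disjoint_compl_right.mono_left interior_subset_closure
  obtain ⟨z, hzs, hzt⟩ := hst
  have hsint : s ⊆ interior t :=
    hs.subset_left_of_subset_union isOpen_interior isClosed_closure.isOpen_compl hdisj hcover
      ⟨z, hzs, (hcover hzs).resolve_right (not_not.2 (subset_closure hzt))⟩
  obtain ⟨y, hys, hyt⟩ := hsdiff
  exact hyt (interior_subset (hsint hys))

section NormedSpace

variable {E : Type*} [NormedAddCommGroup E] [NormedSpace ℝ E] {H : Set E}

theorem exists_add_smul_mem_frontier (hH : Bornology.IsBounded H) {x d : E} (hx : x ∈ H)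
    (hd : d ≠ 0) : ∃ t : ℝ, 0 ≤ t ∧ x + t • d ∈ frontier H := by
  obtain ⟨R, hR⟩ := hH.subset_closedBall x
  have hout : x + ((|R| + 1) / ‖d‖) • d ∉ H := fun h => by
    have := Metric.mem_closedBall.1 (hR h)
    rw [dist_eq_norm, add_sub_cancel_left, norm_smul, Real.norm_of_nonneg (by positivity),
      div_mul_cancel₀ _ (norm_ne_zero_iff.2 hd)] at this
    linarith [le_abs_self R]
  have hray : IsPreconnected ((fun t : ℝ => x + t • d) '' Ici 0) :=
    isPreconnected_Ici.image _ (by fun_prop : Continuous fun t : ℝ => x + t • d).continuousOn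
  obtain ⟨_, ⟨t, ht, rfl⟩, hfr⟩ := hray.inter_frontier_nonempty
    ⟨x, ⟨0, self_mem_Ici, by simp⟩, hx⟩ ⟨_, ⟨_, mem_Ici.2 (by positivity), rfl⟩, hout⟩
  exact ⟨t, ht, hfr⟩

theorem exists_mem_frontier_mem_segment [Nontrivial E] (hH : Bornology.IsBounded H) {p x : E}
    (hx : x ∈ H) : ∃ B ∈ frontier H, x ∈ segment ℝ p B := by
  rcases eq_or_ne x p with rfl | hxp
  · obtain ⟨d, hd⟩ := exists_ne (0 : E)
    obtain ⟨t, -, hB⟩ := exists_add_smul_mem_frontier hH hx hd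
    exact ⟨_, hB, left_mem_segment ℝ x _⟩
  · obtain ⟨t, ht, hB⟩ := exists_add_smul_mem_frontier hH hx (sub_ne_zero.2 hxp)
    have : 1 + t ≠ 0 := by positivity
    refine ⟨_, hB, t / (1 + t), 1 / (1 + t), by positivity, by positivity, by field_simp; ring, ?_⟩
    match_scalars
    · field_simp; ring
    · field_simp

theorem exists_frontier_family_subset_convexHull {ι : Type*} [Nontrivial E] [Nontrivial ι]
    (hH : Bornology.IsBounded H) (Z : ι → E) (hZ : ∀ i, Z i ∈ H) :
    ∃ Z' : ι → E, (∀ i, Z' i ∈ frontier H) ∧ range Z ⊆ convexHull ℝ (range Z') := by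
  classical
  obtain ⟨i₀, i₁, hi⟩ := exists_pair_ne ι
  obtain ⟨q, hq, hZq⟩ := exists_mem_frontier_mem_segment hH (p := Z i₁) (hZ i₀)
  choose B hB hZB using fun i => exists_mem_frontier_mem_segment hH (p := q) (hZ i)
  refine ⟨Function.update B i₀ q, fun i => ?_, ?_⟩
  · rcases eq_or_ne i i₀ with rfl | h
    · simpa using hq
    · simpa [h] using hB i
  have hcov : ∀ i ≠ i₀, Z i ∈ convexHull ℝ (range (Function.update B i₀ q)) := fun i h =>
    segment_subset_convexHull (mem_range.2 ⟨i₀, by simp⟩) (mem_range.2 ⟨i, by simp [h]⟩) (hZB i)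
  rintro _ ⟨i, rfl⟩
  rcases eq_or_ne i i₀ with rfl | h
  · exact (convex_convexHull ℝ _).segment_subset (hcov i₁ hi.symm)
      (subset_convexHull ℝ _ (mem_range.2 ⟨i, by simp⟩)) hZq
  · exact hcov i h

end NormedSpace

theorem exists_rowStoch {a b : ℕ} (hb : 0 < b) : ∃ A : Matrix (Fin a) (Fin b) ℝ, RowStoch A :=
  ⟨fun _ => Pi.single ⟨0, hb⟩ 1,
    rowStoch_iff_forall_mem_stdSimplex.2 fun _ => single_mem_stdSimplex ℝ _⟩

theorem exists_colStoch {a b : ℕ} (ha : 0 < a) : ∃ A : Matrix (Fin a) (Fin b) ℝ, ColStoch A :=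
  let ⟨B, hB⟩ := exists_rowStoch (a := b) ha
  ⟨Bᵀ, by rwa [colStoch_iff_rowStoch_transpose, Matrix.transpose_transpose]⟩

theorem exists_frob2_minimizer {n m k c : ℕ} (hk : 0 < k) (hn : 0 < n) (hc : 0 < c)
    (X : Matrix (Fin n) (Fin m) ℝ) (V : Matrix (Fin n) (Fin c) ℝ) :
    ∃ (α : Matrix (Fin n) (Fin k) ℝ) (β : Matrix (Fin k) (Fin n) ℝ)
      (γ : Matrix (Fin c) (Fin m) ℝ),
      RowStoch α ∧ RowStoch β ∧ ColStoch γ ∧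
      ∀ (α' : Matrix (Fin n) (Fin k) ℝ) (β' : Matrix (Fin k) (Fin n) ℝ)
        (γ' : Matrix (Fin c) (Fin m) ℝ), RowStoch α' → RowStoch β' → ColStoch γ' →
        frob2 (X - α * (β * V) * γ) ≤ frob2 (X - α' * (β' * V) * γ') := by
  obtain ⟨α₀, hα₀⟩ := exists_rowStoch (a := n) hk
  obtain ⟨β₀, hβ₀⟩ := exists_rowStoch (a := k) hn
  obtain ⟨γ₀, hγ₀⟩ := exists_colStoch (b := m) hc
  have hcont : Continuous fun q : Matrix (Fin n) (Fin k) ℝ ×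
      Matrix (Fin k) (Fin n) ℝ × Matrix (Fin c) (Fin m) ℝ =>
      frob2 (X - q.1 * (q.2.1 * V) * q.2.2) := by
    unfold frob2
    fun_prop
  have hS : IsCompact ({A : Matrix (Fin n) (Fin k) ℝ | RowStoch A} ×ˢ
      {B : Matrix (Fin k) (Fin n) ℝ | RowStoch B} ×ˢ
      {C : Matrix (Fin c) (Fin m) ℝ | ColStoch C}) :=
    isCompact_setOf_rowStoch.prod (isCompact_setOf_rowStoch.prod isCompact_setOf_colStoch)
  obtain ⟨⟨α, β, γ⟩, ⟨hα, hβ, hγ⟩, hmin⟩ := hS.exists_isMinOn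
      ⟨(α₀, β₀, γ₀), hα₀, hβ₀, hγ₀⟩ hcont.continuousOn
  exact ⟨α, β, γ, hα, hβ, hγ, fun α' β' γ' hα' hβ' hγ' =>
    isMinOn_iff.1 hmin (α', β', γ') ⟨hα', hβ', hγ'⟩⟩

theorem stmt_0_general (n m k c : ℕ) (hk1 : 1 < k) (hkn : k < n) (hc1 : 1 < c)
    (X : Matrix (Fin n) (Fin m) ℝ) (θ : Matrix (Fin m) (Fin c) ℝ) :
    ∃ (α : Matrix (Fin n) (Fin k) ℝ) (β : Matrix (Fin k) (Fin n) ℝ)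
      (γ : Matrix (Fin c) (Fin m) ℝ),
      RowStoch α ∧ RowStoch β ∧ ColStoch γ ∧
      (∀ (α' : Matrix (Fin n) (Fin k) ℝ) (β' : Matrix (Fin k) (Fin n) ℝ)
         (γ' : Matrix (Fin c) (Fin m) ℝ),
        RowStoch α' → RowStoch β' → ColStoch γ' →
        frob2 (X - α * (β * (X * θ)) * γ) ≤ frob2 (X - α' * (β' * (X * θ)) * γ')) ∧
      (∀ g : Fin k,
        (β * (X * θ)) g ∈
          frontier (convexHull ℝ (Set.range fun i : Fin n => (X * θ) i))) := by
  obtain ⟨α, β, γ, hα, hβ, hγ, hmin⟩ :=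
    exists_frob2_minimizer (k := k) (by omega) (by omega) (by omega) X (X * θ)
  generalize X * θ = V at hmin ⊢
  have : NeZero c := ⟨by omega⟩
  have : Nontrivial (Fin k) := Fin.nontrivial_iff_two_le.2 hk1
  have hH : IsCompact (convexHull ℝ (range V.row)) :=
    (finite_range V.row).isCompact_convexHull (𝕜 := ℝ)
  obtain ⟨Z, hZ, hZβ⟩ := exists_frontier_family_subset_convexHull hH.isBounded (β * V).row
    ((exists_rowStoch_mul_eq_iff V (β * V)).1 ⟨β, hβ, rfl⟩)
  obtain ⟨β', hβ', hβ'V⟩ := (exists_rowStoch_mul_eq_iff V Z).2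
    fun g => hH.isClosed.frontier_subset (hZ g)
  obtain ⟨α', hα', hα'Z⟩ := (exists_rowStoch_mul_eq_iff Z (α * (β * V))).2
    fun r => convexHull_min hZβ (convex_convexHull ℝ _)
      ((exists_rowStoch_mul_eq_iff (β * V) _).1 ⟨α, hα, rfl⟩ r)
  refine ⟨α', β', γ, hα', hβ', hγ, ?_, fun g => ?_⟩
  · simpa only [hβ'V, hα'Z] using hmin
  · rw [hβ'V]
    exact hZ g

/-- Proposition 1: with θ fixed column-stochastic and V = Xθ, there exist optimal
row-stochastic α, β and column-stochastic γ minimizing ‖X − α(βV)γ‖² such that every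
row of the biarchetype matrix Z = βXθ lies on the frontier of the convex hull of the
rows of V. -/
theorem stmt_0 (n m k c : ℕ) (hk1 : 1 < k) (hkn : k < n) (hc1 : 1 < c) (hcm : c < m)
    (X : Matrix (Fin n) (Fin m) ℝ) (θ : Matrix (Fin m) (Fin c) ℝ) (hθ : ColStoch θ) :
    ∃ (α : Matrix (Fin n) (Fin k) ℝ) (β : Matrix (Fin k) (Fin n) ℝ)
      (γ : Matrix (Fin c) (Fin m) ℝ),
      RowStoch α ∧ RowStoch β ∧ ColStoch γ ∧
      (∀ (α' : Matrix (Fin n) (Fin k) ℝ) (β' : Matrix (Fin k) (Fin n) ℝ)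
         (γ' : Matrix (Fin c) (Fin m) ℝ),
        RowStoch α' → RowStoch β' → ColStoch γ' →
        frob2 (X - α * (β * (X * θ)) * γ) ≤ frob2 (X - α' * (β' * (X * θ)) * γ')) ∧
      (∀ g : Fin k,
        (β * (X * θ)) g ∈
          frontier (convexHull ℝ (Set.range fun i : Fin n => (X * θ) i))) :=
  stmt_0_general n m k c hk1 hkn hc1 X θ
end

section
/- Let X be the 5×5 real matrix with entries x_{ij} = 5(i−1) + j for i, j ∈ {1, …, 5} (i.e. rows (1,2,3,4,5), (6,7,8,9,10), (11,12,13,14,15), (16,17,18,19,20), (21,22,23,24,25)). Then there exist a row-stochastic 5×2 matrix α, a row-stochastic 2×5 matrix β, a column-stochastic 5×2 matrix θ, and a column-stochastic 2×5 matrix γ such that βXθ equals the 2×2 matrix with rows (1, 5) and (21, 25) and such that X = α(βXθ)γ exactly, so the residual sum of squares ‖X − αβXθγ‖² equals 0. -/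
open Matrix

/-- The 5×5 matrix of Example 1, with entries x_{ij} = 5(i−1)+j (1-indexed), i.e. rows
(1,2,3,4,5), (6,7,8,9,10), (11,12,13,14,15), (16,17,18,19,20), (21,22,23,24,25). -/
def Xex : Matrix (Fin 5) (Fin 5) ℝ :=
  Matrix.of fun i j => 5 * (i : ℝ) + (j : ℝ) + 1

noncomputable def αex : Matrix (Fin 5) (Fin 2) ℝ :=
  !![1, 0; 3/4, 1/4; 1/2, 1/2; 1/4, 3/4; 0, 1]

noncomputable def βex : Matrix (Fin 2) (Fin 5) ℝ :=
  !![1, 0, 0, 0, 0; 0, 0, 0, 0, 1]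

noncomputable def θex : Matrix (Fin 5) (Fin 2) ℝ :=
  !![1, 0; 0, 0; 0, 0; 0, 0; 0, 1]

noncomputable def γex : Matrix (Fin 2) (Fin 5) ℝ :=
  !![1, 3/4, 1/2, 1/4, 0; 0, 1/4, 1/2, 3/4, 1]

set_option maxHeartbeats 1600000 in
/-- Example 1 with k = c = 2: there are stochastic α, β, θ, γ with biarchetypes
Z = βXθ = [[1,5],[21,25]] and RSS = 0. -/
theorem stmt_9 :
    ∃ (α : Matrix (Fin 5) (Fin 2) ℝ) (β : Matrix (Fin 2) (Fin 5) ℝ)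
      (θ : Matrix (Fin 5) (Fin 2) ℝ) (γ : Matrix (Fin 2) (Fin 5) ℝ),
      ((∀ i j, 0 ≤ α i j) ∧ ∀ i, ∑ j, α i j = 1) ∧
      ((∀ i j, 0 ≤ β i j) ∧ ∀ i, ∑ j, β i j = 1) ∧
      ((∀ i j, 0 ≤ θ i j) ∧ ∀ j, ∑ i, θ i j = 1) ∧
      ((∀ i j, 0 ≤ γ i j) ∧ ∀ j, ∑ i, γ i j = 1) ∧
      β * Xex * θ = !![1, 5; 21, 25] ∧
      Xex = α * (β * Xex * θ) * γ ∧
      ∑ i, ∑ j, ((Xex - α * (β * Xex * θ) * γ) i j) ^ 2 = 0 := by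
  have hZ : βex * Xex * θex = !![1, 5; 21, 25] := by
    ext i j
    fin_cases i <;> fin_cases j <;>
      norm_num [Xex, βex, θex, Matrix.mul_apply, Fin.sum_univ_succ, Matrix.vecHead, Matrix.vecTail, Fin.succ]
  have hX : Xex = αex * (βex * Xex * θex) * γex := by
    rw [hZ]
    ext i j
    fin_cases i <;> fin_cases j <;>
      norm_num [Xex, αex, γex, Matrix.mul_apply, Fin.sum_univ_succ]
  refine ⟨αex, βex, θex, γex, ⟨?_, ?_⟩, ⟨?_, ?_⟩, ⟨?_, ?_⟩, ⟨?_, ?_⟩, hZ, hX, ?_⟩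
  · intro i j; fin_cases i <;> fin_cases j <;> norm_num [αex]
  · intro i; fin_cases i <;> norm_num [αex, Fin.sum_univ_succ]
  · intro i j; fin_cases i <;> fin_cases j <;> norm_num [βex]
  · intro i; fin_cases i <;> norm_num [βex, Fin.sum_univ_succ]
  · intro i j; fin_cases i <;> fin_cases j <;> norm_num [θex]
  · intro j; fin_cases j <;> norm_num [θex, Fin.sum_univ_succ]
  · intro i j; fin_cases i <;> fin_cases j <;> norm_num [γex]
  · intro j; fin_cases j <;> norm_num [γex, Fin.sum_univ_succ]
  · rw [← hX]
    simp
end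

section
/- Let X be an n×m real matrix, α an n×k real matrix, and γ a c×m real matrix such that αᵀα (k×k) and γγᵀ (c×c) are invertible. Define Z₀ = (αᵀα)⁻¹ αᵀ X γᵀ (γγᵀ)⁻¹. Then for every k×c real matrix Z, ‖X − α Z₀ γ‖² ≤ ‖X − α Z γ‖², i.e. Z₀ minimizes Z ↦ ‖X − αZγ‖² over all k×c real matrices Z. -/
open Matrix

/-- The least-squares formula Z₀ = (αᵀα)⁻¹ αᵀ X γᵀ (γγᵀ)⁻¹ minimizes
Z ↦ ‖X − αZγ‖² (squared Frobenius norm). -/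
theorem stmt_10 (n m k c : ℕ) (X : Matrix (Fin n) (Fin m) ℝ)
    (α : Matrix (Fin n) (Fin k) ℝ) (γ : Matrix (Fin c) (Fin m) ℝ)
    (hα : IsUnit (αᵀ * α)) (hγ : IsUnit (γ * γᵀ)) :
    ∀ Z : Matrix (Fin k) (Fin c) ℝ,
      ∑ i, ∑ j, ((X - α * ((αᵀ * α)⁻¹ * αᵀ * X * γᵀ * (γ * γᵀ)⁻¹) * γ) i j) ^ 2 ≤
        ∑ i, ∑ j, ((X - α * Z * γ) i j) ^ 2 := by
  intro Z
  have hdα : IsUnit (αᵀ * α).det := (Matrix.isUnit_iff_isUnit_det _).mp hα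
  have hdγ : IsUnit (γ * γᵀ).det := (Matrix.isUnit_iff_isUnit_det _).mp hγ
  set Z₀ : Matrix (Fin k) (Fin c) ℝ := (αᵀ * α)⁻¹ * αᵀ * X * γᵀ * (γ * γᵀ)⁻¹ with hZ₀
  set R : Matrix (Fin n) (Fin m) ℝ := X - α * Z₀ * γ with hR
  set D : Matrix (Fin k) (Fin c) ℝ := Z₀ - Z with hD
  set B : Matrix (Fin n) (Fin m) ℝ := α * D * γ with hB
  have hkey : αᵀ * R * γᵀ = 0 := by
    have h1 : αᵀ * (α * Z₀ * γ) * γᵀ = αᵀ * X * γᵀ := by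
      have : αᵀ * (α * Z₀ * γ) * γᵀ = (αᵀ * α) * Z₀ * (γ * γᵀ) := by
        simp only [Matrix.mul_assoc]
      rw [this, hZ₀]
      rw [show (αᵀ * α) * ((αᵀ * α)⁻¹ * αᵀ * X * γᵀ * (γ * γᵀ)⁻¹) * (γ * γᵀ)
            = (αᵀ * α) * (αᵀ * α)⁻¹ * (αᵀ * X * γᵀ) * ((γ * γᵀ)⁻¹ * (γ * γᵀ)) by
          simp only [Matrix.mul_assoc]]
      rw [Matrix.mul_nonsing_inv _ hdα, Matrix.nonsing_inv_mul _ hdγ,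
        Matrix.one_mul, Matrix.mul_one]
    rw [hR, Matrix.mul_sub, Matrix.sub_mul, h1, sub_self]
  have hcross : ∑ i, ∑ j, R i j * B i j = 0 := by
    have htr : ∑ i, ∑ j, R i j * B i j = Matrix.trace (R * Bᵀ) := by
      simp [Matrix.trace, Matrix.mul_apply, Matrix.diag]
    rw [htr]
    have : R * Bᵀ = (R * γᵀ * Dᵀ) * αᵀ := by
      rw [hB]; simp [Matrix.transpose_mul, Matrix.mul_assoc]
    rw [this, Matrix.trace_mul_comm]
    have : αᵀ * (R * γᵀ * Dᵀ) = (αᵀ * R * γᵀ) * Dᵀ := by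
      simp only [Matrix.mul_assoc]
    rw [this, hkey, Matrix.zero_mul, Matrix.trace_zero]
  have hXZ : X - α * Z * γ = R + B := by
    rw [hR, hB, hD]
    simp [Matrix.mul_sub, Matrix.sub_mul]
  rw [hXZ]
  have expand : ∑ i, ∑ j, ((R + B) i j) ^ 2
      = ∑ i, ∑ j, (R i j) ^ 2 + 2 * (∑ i, ∑ j, R i j * B i j)
        + ∑ i, ∑ j, (B i j) ^ 2 := by
    simp only [Matrix.add_apply, add_sq, Finset.sum_add_distrib, Finset.mul_sum]
    ring
  rw [expand, hcross]
  have hBnn : 0 ≤ ∑ i, ∑ j, (B i j) ^ 2 :=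
    Finset.sum_nonneg fun i _ => Finset.sum_nonneg fun j _ => sq_nonneg _
  linarith
end
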